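/- arXiv:1407.2285 — 4 statements merged into one kernel-verified Lean document; each statement's English description precedes it below -/
import Mathlib

section
/- Let φ be a k-linear form on ℝ^n such that |φ(x¹,…,x^k)| ≤ b · ∏ᵢ ‖xⁱ‖ for every choice of vectors x¹,…,x^k ∈ {0,1}^n. Then |φ(x¹,…,x^k)| ≤ 2^{k/2} · b · ∏ᵢ ‖xⁱ‖ for every choice of vectors x¹,…,x^k ∈ {0,−1,1}^n. -/
/-!
Split each `x i ∈ {0, ±1}ⁿ` as `(x i)⁺ - (x i)⁻` with both parts in `{0, 1}ⁿ`. Expanding `φ`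
multilinearly gives `2ᵏ` terms, each `±φ` of a `{0, 1}`-family, so the hypothesis bounds `|φ x|`
by `b * ∏ᵢ (‖(x i)⁺‖ + ‖(x i)⁻‖)`. The parts have disjoint supports, so
`‖(x i)⁺‖² + ‖(x i)⁻‖² = ‖x i‖²` and hence `‖(x i)⁺‖ + ‖(x i)⁻‖ ≤ √2 ‖x i‖`.
-/

theorem MultilinearMap.abs_map_sub_le_mul_prod_add {ι E : Type*} [Fintype ι] [AddCommGroup E]
    [Module ℝ E] (φ : MultilinearMap ℝ (fun _ : ι => E) ℝ) {S : Set E} (w : E → ℝ) (b : ℝ)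
    (h : ∀ y : ι → E, (∀ i, y i ∈ S) → |φ y| ≤ b * ∏ i, w (y i))
    {p m : ι → E} (hp : ∀ i, p i ∈ S) (hm : ∀ i, m i ∈ S) :
    |φ (p - m)| ≤ b * ∏ i, (w (p i) + w (m i)) := by
  classical
  have hsign (s : Finset ι) : |φ (s.piecewise p (-m))| = |φ (s.piecewise p m)| := by
    have : s.piecewise p (-m) =
        sᶜ.piecewise (fun i => (-1 : ℝ) • s.piecewise p m i) (s.piecewise p m) := by
      ext i : 1
      by_cases hi : i ∈ s <;> simp [hi]
    rw [this, φ.map_piecewise_smul, smul_eq_mul, abs_mul, Finset.abs_prod]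
    simp
  have hprod (s : Finset ι) :
      ∏ i, w (s.piecewise p m i) = (∏ i ∈ s, w (p i)) * ∏ i ∈ sᶜ, w (m i) := by
    rw [← Finset.prod_mul_prod_compl s]
    congr 1 <;> refine Finset.prod_congr rfl fun i hi => ?_
    · simp [hi]
    · simp [Finset.mem_compl.mp hi]
  calc |φ (p - m)| = |∑ s : Finset ι, φ (s.piecewise p (-m))| := by
        rw [sub_eq_add_neg, φ.map_add_univ]
    _ ≤ ∑ s : Finset ι, |φ (s.piecewise p m)| :=
        (Finset.abs_sum_le_sum_abs _ _).trans_eq (by simp only [hsign])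
    _ ≤ ∑ s : Finset ι, b * ∏ i, w (s.piecewise p m i) :=
        Finset.sum_le_sum fun s _ => h _ fun i => by by_cases hi : i ∈ s <;> simp [hi, hp, hm]
    _ = b * ∏ i, (w (p i) + w (m i)) := by simp only [Fintype.prod_add, Finset.mul_sum, hprod]

theorem Real.posPart_sq_add_negPart_sq (t : ℝ) : t⁺ ^ 2 + t⁻ ^ 2 = t ^ 2 := by
  rcases le_total 0 t with ht | ht
  · simp [posPart_eq_self.mpr ht, negPart_eq_zero.mpr ht]
  · simp [posPart_eq_zero.mpr ht, negPart_eq_neg.mpr ht]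

theorem Real.sqrt_add_sqrt_le_sqrt_two_mul_sqrt {a c : ℝ} (ha : 0 ≤ a) (hc : 0 ≤ c) :
    √a + √c ≤ √2 * √(a + c) := by
  rw [← Real.sqrt_mul zero_le_two, Real.le_sqrt (by positivity) (by positivity)]
  simpa [Real.sq_sqrt ha, Real.sq_sqrt hc] using add_sq_le (a := √a) (b := √c)

theorem sqrt_sum_posPart_sq_add_sqrt_sum_negPart_sq_le {ι : Type*} [Fintype ι] (v : ι → ℝ) :
    √(∑ j, (v⁺ j) ^ 2) + √(∑ j, (v⁻ j) ^ 2) ≤ √2 * √(∑ j, v j ^ 2) := by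
  have hsum : ∑ j, (v⁺ j) ^ 2 + ∑ j, (v⁻ j) ^ 2 = ∑ j, v j ^ 2 := by
    simp only [← Finset.sum_add_distrib, Pi.posPart_apply, Pi.negPart_apply,
      Real.posPart_sq_add_negPart_sq]
  rw [← hsum]
  exact Real.sqrt_add_sqrt_le_sqrt_two_mul_sqrt (by positivity) (by positivity)

theorem stmt_2 (n k : ℕ)
    (φ : MultilinearMap ℝ (fun _ : Fin k => (Fin n → ℝ)) ℝ) (b : ℝ)
    (h : ∀ x : Fin k → (Fin n → ℝ), (∀ i j, x i j = 0 ∨ x i j = 1) →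
      |φ x| ≤ b * ∏ i, Real.sqrt (∑ j, (x i j) ^ 2)) :
    ∀ x : Fin k → (Fin n → ℝ), (∀ i j, x i j = 0 ∨ x i j = 1 ∨ x i j = -1) →
      |φ x| ≤ 2 ^ ((k : ℝ) / 2) * b * ∏ i, Real.sqrt (∑ j, (x i j) ^ 2) := by
  intro x hx
  have hentry (i : Fin k) (j : Fin n) : ((x i j)⁺ = 0 ∨ (x i j)⁺ = 1) ∧
      ((x i j)⁻ = 0 ∨ (x i j)⁻ = 1) ∧ (|x i j| = 0 ∨ |x i j| = 1) := by
    rcases hx i j with hij | hij | hij <;> norm_num [hij]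
  have hdecomp : |φ x| ≤ b * ∏ i, (√(∑ j, ((x i)⁺ j) ^ 2) + √(∑ j, ((x i)⁻ j) ^ 2)) := by
    have hx_eq : x = (fun i => (x i)⁺) - fun i => (x i)⁻ :=
      funext fun i => (posPart_sub_negPart _).symm
    calc |φ x| = |φ ((fun i => (x i)⁺) - fun i => (x i)⁻)| := by rw [← hx_eq]
      _ ≤ _ := φ.abs_map_sub_le_mul_prod_add (S := {v | ∀ j, v j = 0 ∨ v j = 1})
          (fun v => √(∑ j, v j ^ 2)) b h (fun i j => (hentry i j).1) (fun i j => (hentry i j).2.1)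
  -- `b` is not assumed nonnegative; this covers the case `b < 0`.
  have hbN : 0 ≤ b * ∏ i, √(∑ j, x i j ^ 2) := by
    have := h (fun i => |x i|) fun i j => (hentry i j).2.2
    simp only [Pi.abs_apply, sq_abs] at this
    exact (abs_nonneg _).trans this
  have hscale : ∏ i, √2 * √(∑ j, x i j ^ 2) = 2 ^ ((k : ℝ) / 2) * ∏ i, √(∑ j, x i j ^ 2) := by
    rw [Finset.prod_mul_distrib, Finset.prod_const, Finset.card_univ, Fintype.card_fin,
      Real.rpow_div_two_eq_sqrt _ zero_le_two, Real.rpow_natCast]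
  rcases le_or_gt 0 b with hb | hb
  · calc |φ x| ≤ b * ∏ i, (√(∑ j, ((x i)⁺ j) ^ 2) + √(∑ j, ((x i)⁻ j) ^ 2)) := hdecomp
      _ ≤ b * ∏ i, √2 * √(∑ j, x i j ^ 2) := by
          gcongr with i
          exact sqrt_sum_posPart_sq_add_sqrt_sum_negPart_sq_le (x i)
      _ = 2 ^ ((k : ℝ) / 2) * b * ∏ i, √(∑ j, x i j ^ 2) := by rw [hscale]; ring
  · calc |φ x| ≤ b * ∏ i, (√(∑ j, ((x i)⁺ j) ^ 2) + √(∑ j, ((x i)⁻ j) ^ 2)) := hdecomp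
      _ ≤ 0 := mul_nonpos_of_nonpos_of_nonneg hb.le (by positivity)
      _ ≤ 2 ^ ((k : ℝ) / 2) * (b * ∏ i, √(∑ j, x i j ^ 2)) := mul_nonneg (by positivity) hbN
      _ = 2 ^ ((k : ℝ) / 2) * b * ∏ i, √(∑ j, x i j ^ 2) := by ring
end

section
/- Let B be a k-linear form on ℝ^n such that |B(x,…,x)| ≤ b‖x‖^k for every vector x all of whose coordinates lie in {0} ∪ {±2^{−ℓ} : ℓ ∈ ℕ}, and such that B(e_{i₁},…,e_{i_k}) = 0 whenever the indices i₁,…,i_k are not all distinct. Then the spectral norm of B (the supremum of |B(x¹,…,x^k)|/∏‖xⁱ‖ over nonzero vectors, or equivalently for symmetric B the supremum of |B(x,…,x)|/‖x‖^k) satisfies sup_{x ≠ 0} |B(x,…,x)|/‖x‖^k ≤ 2^k · b. -/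
/-!
After scaling, all coordinates of `x` have modulus at most `1`. Round each coordinate `x i ≠ 0`
to the signed power of two `y i` with `|x i| ≤ |y i| < 2 |x i|`, and keep it with probability
`p i = x i / y i` independently (otherwise set it to `0`). The resulting random vector `Z` has
coordinates in `{0} ∪ {±2^{-ℓ}}` and `‖Z‖ ≤ 2 ‖x‖`. Expanding `B(Z, …, Z)` in the standard basis,
only products of distinct coordinates survive, and these have expectation `∏ x i`; hence
`E[B(Z, …, Z)] = B(x, …, x)`, and averaging the hypothesis over `Z` gives `|B(x, …, x)| ≤ 2^k b ‖x‖^k`.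
-/

open Finset

def IsZeroOrSignedInvTwoPow (t : ℝ) : Prop :=
  t = 0 ∨ ∃ ℓ : ℕ, t = (2 : ℝ) ^ (-(ℓ : ℤ)) ∨ t = -(2 : ℝ) ^ (-(ℓ : ℤ))

lemma exists_two_zpow_neg_mem_Ico {s : ℝ} (hs0 : 0 < s) (hs1 : s ≤ 1) :
    ∃ ℓ : ℕ, s ≤ (2 : ℝ) ^ (-(ℓ : ℤ)) ∧ (2 : ℝ) ^ (-(ℓ : ℤ)) < 2 * s := by
  refine ⟨Nat.log 2 ⌊s⁻¹⌋₊, ?_⟩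
  have hclog : Int.clog 2 s = -(Nat.log 2 ⌊s⁻¹⌋₊ : ℤ) := Int.clog_of_right_le_one 2 hs1
  have hle := Int.self_le_zpow_clog (R := ℝ) (b := 2) one_lt_two s
  have hlt := Int.zpow_pred_clog_lt_self (b := 2) one_lt_two hs0
  push_cast at hle hlt
  rw [zpow_sub₀ two_ne_zero, zpow_one, div_lt_iff₀ two_pos] at hlt
  rw [← hclog]
  exact ⟨hle, by linarith⟩

lemma exists_dyadic_rounding {t : ℝ} (ht : |t| ≤ 1) :
    ∃ p y : ℝ, p ∈ Set.Icc 0 1 ∧ IsZeroOrSignedInvTwoPow y ∧ |y| ≤ 2 * |t| ∧ p * y = t := by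
  rcases eq_or_ne t 0 with rfl | ht0
  · exact ⟨0, 0, by simp, Or.inl rfl, by simp, by simp⟩
  obtain ⟨ℓ, hle, hlt⟩ := exists_two_zpow_neg_mem_Ico (abs_pos.2 ht0) ht
  have hpos : (0 : ℝ) < 2 ^ (-(ℓ : ℤ)) := by positivity
  have hp : |t| / 2 ^ (-(ℓ : ℤ)) ∈ Set.Icc (0 : ℝ) 1 :=
    ⟨by positivity, (div_le_one hpos).2 hle⟩
  rcases abs_cases t with ⟨habs, -⟩ | ⟨habs, -⟩
  · refine ⟨_, _, hp, Or.inr ⟨ℓ, Or.inl rfl⟩, ?_, ?_⟩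
    · rw [abs_of_pos hpos]; exact hlt.le
    · rw [habs]; field_simp
  · refine ⟨_, _, hp, Or.inr ⟨ℓ, Or.inr rfl⟩, ?_, ?_⟩
    · rw [abs_neg, abs_of_pos hpos]; exact hlt.le
    · rw [habs]; field_simp

theorem MultilinearMap.apply_eq_sum_pi_single {R ι κ M : Type*} [CommSemiring R]
    [AddCommMonoid M] [Module R M] [Fintype ι] [DecidableEq ι] [Fintype κ] [DecidableEq κ]
    (f : MultilinearMap R (fun _ : ι => κ → R) M) (v : ι → κ → R) :
    f v = ∑ idx : ι → κ, (∏ j, v j (idx j)) • f (fun j => Pi.single (idx j) 1) := by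
  conv_lhs => rw [show v = fun j => ∑ i, v j i • Pi.single i 1 from
    funext fun j => pi_eq_sum_univ' (v j), f.map_sum]
  simp_rw [f.map_smul_univ]

section Bernoulli

variable {ι : Type*} [Fintype ι]

/-- The probability of `ω` when the coordinates `ω i` are independent with `P(ω i) = p i`. -/
def bernoulliWeight (p : ι → ℝ) (ω : ι → Bool) : ℝ :=
  ∏ i, if ω i then p i else 1 - p i

lemma bernoulliWeight_nonneg {p : ι → ℝ} (hp : ∀ i, p i ∈ Set.Icc 0 1) (ω : ι → Bool) :
    0 ≤ bernoulliWeight p ω :=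
  prod_nonneg fun i _ => by
    have := hp i
    split_ifs <;> simp only [Set.mem_Icc] at this <;> linarith

lemma sum_bernoulliWeight_mul_prod [DecidableEq ι] (p : ι → ℝ) (S : Finset ι)
    (f : ι → Bool → ℝ) :
    ∑ ω, bernoulliWeight p ω * ∏ i ∈ S, f i (ω i) =
      ∏ i ∈ S, (p i * f i true + (1 - p i) * f i false) := by
  simp_rw [bernoulliWeight, ← Fintype.prod_ite_mem S, ← prod_mul_distrib]
  rw [← Fintype.prod_sum fun i (β : Bool) =>
    (if β then p i else 1 - p i) * if i ∈ S then f i β else 1]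
  refine prod_congr rfl fun i _ => ?_
  split_ifs <;> simp

lemma sum_bernoulliWeight [DecidableEq ι] (p : ι → ℝ) : ∑ ω, bernoulliWeight p ω = 1 := by
  simpa using sum_bernoulliWeight_mul_prod p ∅ fun _ _ => 0

end Bernoulli

lemma sqrt_sum_sq_le_mul {ι : Type*} [Fintype ι] {u v : ι → ℝ} {c : ℝ} (hc : 0 ≤ c)
    (h : ∀ i, |u i| ≤ c * |v i|) : √(∑ i, u i ^ 2) ≤ c * √(∑ i, v i ^ 2) := by
  rw [← Real.sqrt_sq hc, ← Real.sqrt_mul (sq_nonneg c), mul_sum]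
  refine Real.sqrt_le_sqrt (sum_le_sum fun i _ => ?_)
  calc u i ^ 2 = |u i| ^ 2 := (sq_abs _).symm
    _ ≤ (c * |v i|) ^ 2 := pow_le_pow_left₀ (abs_nonneg _) (h i) 2
    _ = c ^ 2 * v i ^ 2 := by rw [mul_pow, sq_abs]

section RandomRounding

variable {ι κ M : Type*} [Fintype ι] [DecidableEq ι] [Fintype κ] [DecidableEq κ]
  [AddCommGroup M] [Module ℝ M]

/-- Only products of distinct, hence independent, coordinates occur since `f` vanishes on
repeated basis vectors. -/
lemma sum_bernoulliWeight_smul_apply_mask (f : MultilinearMap ℝ (fun _ : κ => ι → ℝ) M)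
    (hdiag : ∀ idx : κ → ι, ¬ Function.Injective idx → f (fun j => Pi.single (idx j) 1) = 0)
    (p y : ι → ℝ) :
    ∑ ω, bernoulliWeight p ω • f (fun _ i => if ω i then y i else 0) =
      f (fun _ i => p i * y i) := by
  rw [f.apply_eq_sum_pi_single (fun _ i => p i * y i)]
  rw [sum_congr rfl fun ω _ => by rw [f.apply_eq_sum_pi_single, smul_sum], sum_comm]
  refine sum_congr rfl fun idx _ => ?_
  by_cases hidx : Function.Injective idx
  · simp_rw [smul_smul]
    rw [← sum_smul]
    congr 1
    have hinj : Set.InjOn idx (univ : Finset κ) := hidx.injOn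
    have := sum_bernoulliWeight_mul_prod p (univ.image idx) fun i (β : Bool) =>
      if β then y i else 0
    simpa only [prod_image hinj, Bool.false_eq_true, if_true, if_false, mul_zero,
      add_zero] using this
  · simp [hdiag idx hidx]

end RandomRounding

section DyadicBound

variable {ι : Type*} [Fintype ι] [DecidableEq ι] {k : ℕ}
  {B : MultilinearMap ℝ (fun _ : Fin k => ι → ℝ) ℝ} {b : ℝ}

lemma nonneg_of_abs_apply_dyadic_le
    (hdyadic : ∀ x : ι → ℝ, (∀ j, IsZeroOrSignedInvTwoPow (x j)) →
      |B (fun _ => x)| ≤ b * √(∑ j, x j ^ 2) ^ k) (i : ι) : 0 ≤ b := by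
  have hsingle : ∀ j, IsZeroOrSignedInvTwoPow ((Pi.single i 1 : ι → ℝ) j) := fun j => by
    by_cases hj : j = i
    · exact Or.inr ⟨0, Or.inl (by simp [hj])⟩
    · exact Or.inl (by simp [hj])
  simpa [Pi.single_apply] using (abs_nonneg _).trans (hdyadic _ hsingle)

lemma abs_apply_le_of_abs_le_one (hb : 0 ≤ b)
    (hdyadic : ∀ x : ι → ℝ, (∀ j, IsZeroOrSignedInvTwoPow (x j)) →
      |B (fun _ => x)| ≤ b * √(∑ j, x j ^ 2) ^ k)
    (hdiag : ∀ idx : Fin k → ι, ¬ Function.Injective idx →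
      B (fun j => Pi.single (idx j) 1) = 0)
    {x : ι → ℝ} (hx : ∀ i, |x i| ≤ 1) :
    |B (fun _ => x)| ≤ 2 ^ k * b * √(∑ j, x j ^ 2) ^ k := by
  choose p y hp hy hyx hpy using fun i => exists_dyadic_rounding (hx i)
  set Z : (ι → Bool) → ι → ℝ := fun ω i => if ω i then y i else 0
  have hZ : ∀ ω, |B (fun _ => Z ω)| ≤ b * (2 * √(∑ j, x j ^ 2)) ^ k := fun ω => by
    refine (hdyadic _ fun i => ?_).trans (mul_le_mul_of_nonneg_left
      (pow_le_pow_left₀ (Real.sqrt_nonneg _) (sqrt_sum_sq_le_mul two_pos.le fun i => ?_) k) hb)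
    · dsimp only [Z]
      split_ifs
      exacts [hy i, Or.inl rfl]
    · by_cases h : ω i <;> simp [Z, h, hyx i]
  have hmean : ∑ ω, bernoulliWeight p ω * B (fun _ => Z ω) = B (fun _ => x) := by
    simpa [hpy] using sum_bernoulliWeight_smul_apply_mask B hdiag p y
  calc |B (fun _ => x)| = |∑ ω, bernoulliWeight p ω * B (fun _ => Z ω)| := by rw [hmean]
    _ ≤ ∑ ω, bernoulliWeight p ω * |B (fun _ => Z ω)| := by
      refine (abs_sum_le_sum_abs _ _).trans_eq (sum_congr rfl fun ω _ => ?_)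
      rw [abs_mul, abs_of_nonneg (bernoulliWeight_nonneg hp ω)]
    _ ≤ ∑ ω, bernoulliWeight p ω * (b * (2 * √(∑ j, x j ^ 2)) ^ k) :=
      sum_le_sum fun ω _ => mul_le_mul_of_nonneg_left (hZ ω) (bernoulliWeight_nonneg hp ω)
    _ = 2 ^ k * b * √(∑ j, x j ^ 2) ^ k := by
      rw [← sum_mul, sum_bernoulliWeight, one_mul, mul_pow]; ring

lemma abs_apply_le (hb : 0 ≤ b)
    (hdyadic : ∀ x : ι → ℝ, (∀ j, IsZeroOrSignedInvTwoPow (x j)) →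
      |B (fun _ => x)| ≤ b * √(∑ j, x j ^ 2) ^ k)
    (hdiag : ∀ idx : Fin k → ι, ¬ Function.Injective idx →
      B (fun j => Pi.single (idx j) 1) = 0)
    (x : ι → ℝ) : |B (fun _ => x)| ≤ 2 ^ k * b * √(∑ j, x j ^ 2) ^ k := by
  set s := √(∑ j, x j ^ 2)
  -- `(s + 1)⁻¹` rather than `s⁻¹`, so that `x = 0` needs no separate treatment
  set c := (s + 1)⁻¹
  have hc : 0 < c := inv_pos.2 (by positivity)
  have hcx : ∀ i, |(c • x) i| ≤ 1 := fun i => by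
    have : |x i| ≤ s := Real.abs_le_sqrt (single_le_sum (fun j _ => sq_nonneg (x j)) (mem_univ i))
    rw [Pi.smul_apply, smul_eq_mul, abs_mul, abs_of_pos hc, inv_mul_le_one₀ (by positivity)]
    linarith
  have hscaled := abs_apply_le_of_abs_le_one hb hdyadic hdiag hcx
  have hBc : B (fun _ => c • x) = c ^ k * B (fun _ => x) := by
    simpa using B.map_smul_univ (fun _ => c) (fun _ => x)
  have hnorm : √(∑ j, (c • x) j ^ 2) ≤ c * s :=
    sqrt_sum_sq_le_mul hc.le fun i => by rw [Pi.smul_apply, smul_eq_mul, abs_mul, abs_of_pos hc]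
  rw [hBc, abs_mul, abs_of_pos (pow_pos hc k)] at hscaled
  refine le_of_mul_le_mul_left (hscaled.trans ?_) (pow_pos hc k)
  calc 2 ^ k * b * √(∑ j, (c • x) j ^ 2) ^ k ≤ 2 ^ k * b * (c * s) ^ k := by gcongr
    _ = c ^ k * (2 ^ k * b * s ^ k) := by ring

end DyadicBound

theorem stmt_3 (n k : ℕ)
    (B : MultilinearMap ℝ (fun _ : Fin k => (Fin n → ℝ)) ℝ) (b : ℝ)
    (hdyadic : ∀ x : Fin n → ℝ,
      (∀ j, x j = 0 ∨ ∃ ℓ : ℕ, x j = (2 : ℝ) ^ (-(ℓ : ℤ)) ∨ x j = -(2 : ℝ) ^ (-(ℓ : ℤ))) →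
      |B (fun _ => x)| ≤ b * (Real.sqrt (∑ j, (x j) ^ 2)) ^ k)
    (hdiag : ∀ idx : Fin k → Fin n, ¬ Function.Injective idx →
      B (fun j => Pi.single (idx j) 1) = 0) :
    ∀ x : Fin n → ℝ, x ≠ 0 →
      |B (fun _ => x)| / (Real.sqrt (∑ j, (x j) ^ 2)) ^ k ≤ 2 ^ k * b := by
  intro x hx
  obtain ⟨i, hi⟩ : ∃ i, x i ≠ 0 := Function.ne_iff.1 hx
  have hb := nonneg_of_abs_apply_dyadic_le hdyadic i
  have hs : 0 < √(∑ j, x j ^ 2) :=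
    Real.sqrt_pos.2 (sum_pos' (fun j _ => sq_nonneg (x j)) ⟨i, mem_univ i, by positivity⟩)
  rw [div_le_iff₀ (pow_pos hs k)]
  exact abs_apply_le hb hdyadic hdiag x
end

section
/- Let H be a k-uniform hypergraph on [n] with adjacency form A and let A_K be the adjacency form of the complete k-uniform hypergraph. Suppose |A(x¹,…,x^k) − α·A_K(x¹,…,x^k)| ≤ ρ ∏ᵢ‖xⁱ‖ for every choice of pairwise orthogonal vectors x¹,…,x^k ∈ {0,1}^n. Then |A(x¹,…,x^k) − α·A_K(x¹,…,x^k)| ≤ ρ·k^{k/2} ∏ᵢ‖xⁱ‖ for every choice of (not necessarily orthogonal) vectors x¹,…,x^k ∈ {0,1}^n. -/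
/-!
Colour the ground set by a function `f : [n] → [k]` and keep, of the `i`-th vector, only its
entries in the colour class `f⁻¹(i)`. The restricted vectors are pairwise disjoint, so the
hypothesis bounds the form on them. Expanding the multilinear form `A - α A_K` in the standard
basis, only injective index tuples contribute, and each of those survives the restriction for
exactly `k^(n-k)` colourings; hence the form at `x` is the average of its values at the
restrictions of `x`. Cauchy–Schwarz over the `k^n` colourings, together with the same count for
the product of the squared norms, turns the sum of the bounds into `k^(n-k) k^(k/2) ∏ ‖xⁱ‖`.
-/

open Finset Function

variable {ι σ : Type*}

theorem sq_prod_sqrt_sum_sq [Fintype ι] [Fintype σ] (x : ι → σ → ℝ) :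
    (∏ i, √(∑ j, x i j ^ 2)) ^ 2 = ∏ i, ∑ j, x i j ^ 2 := by
  rw [← prod_pow]
  exact prod_congr rfl fun i _ => Real.sq_sqrt (sum_nonneg fun j _ => sq_nonneg _)

variable [DecidableEq ι]

def restrictToFibers {R : Type*} [Zero R] (x : ι → σ → R) (f : σ → ι) : ι → σ → R :=
  fun i j => if f j = i then x i j else 0

theorem restrictToFibers_eq_zero_or_one {R : Type*} [Zero R] [One R] {x : ι → σ → R}
    (hx : ∀ i j, x i j = 0 ∨ x i j = 1) (f : σ → ι) (i : ι) (j : σ) :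
    restrictToFibers x f i j = 0 ∨ restrictToFibers x f i j = 1 := by
  unfold restrictToFibers
  split_ifs
  exacts [hx i j, Or.inl rfl]

theorem sum_restrictToFibers_mul_of_ne {R : Type*} [NonUnitalNonAssocSemiring R] [Fintype σ]
    (x : ι → σ → R) (f : σ → ι) {i i' : ι} (hii' : i ≠ i') :
    ∑ j, restrictToFibers x f i j * restrictToFibers x f i' j = 0 :=
  sum_eq_zero fun j _ => by
    unfold restrictToFibers
    split_ifs with h h' <;> simp_all

variable [Fintype ι]

theorem prod_restrictToFibers_apply {R : Type*} [CommMonoidWithZero R] (x : ι → σ → R)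
    (f : σ → ι) (idx : ι → σ) :
    ∏ i, restrictToFibers x f i (idx i) = if ∀ i, f (idx i) = i then ∏ i, x i (idx i) else 0 :=
  Fintype.prod_ite_zero

variable [Fintype σ] [DecidableEq σ]

theorem card_filter_leftInverse_of_injective {idx : ι → σ} (hidx : Injective idx) :
    #{f : σ → ι | ∀ i, f (idx i) = i} = Fintype.card ι ^ (Fintype.card σ - Fintype.card ι) := by
  have hpi : ({f : σ → ι | ∀ i, f (idx i) = i} : Finset _) =
      Fintype.piFinset fun j => {a | ∀ i, idx i = j → a = i} := by
    ext f
    simp only [mem_filter, mem_univ, true_and, Fintype.mem_piFinset]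
    exact ⟨fun hf _ i h => h ▸ hf i, fun hf i => hf _ i rfl⟩
  have hcard (j : σ) : #{a : ι | ∀ i, idx i = j → a = i} =
      if j ∈ univ.image idx then 1 else Fintype.card ι := by
    split_ifs with hj
    · obtain ⟨i₀, -, rfl⟩ := mem_image.1 hj
      simp [hidx.eq_iff, filter_eq']
    · simp_all
  rw [hpi, Fintype.card_piFinset]
  simp only [hcard, prod_ite, prod_const_one, one_mul, prod_const, filter_notMem_eq_sdiff]
  rw [card_univ_sdiff, card_image_of_injective _ hidx, card_univ]

theorem card_filter_leftInverse_le (idx : ι → σ) :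
    #{f : σ → ι | ∀ i, f (idx i) = i} ≤ Fintype.card ι ^ (Fintype.card σ - Fintype.card ι) := by
  by_cases hidx : Injective idx
  · exact (card_filter_leftInverse_of_injective hidx).le
  · refine (card_eq_zero.2 ?_).trans_le (Nat.zero_le _)
    exact filter_eq_empty_iff.2 fun f _ hf => hidx (LeftInverse.injective hf)

section CommSemiring

variable {R : Type*} [CommSemiring R]

theorem sum_prod_restrictToFibers_apply (x : ι → σ → R) (idx : ι → σ) :
    ∑ f : σ → ι, ∏ i, restrictToFibers x f i (idx i) =
      #{f : σ → ι | ∀ i, f (idx i) = i} * ∏ i, x i (idx i) := by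
  simp only [prod_restrictToFibers_apply, ← sum_filter, sum_const, nsmul_eq_mul]

namespace MultilinearMap

variable {N : Type*} [AddCommMonoid N] [Module R N] (M : MultilinearMap R (fun _ : ι => σ → R) N)

theorem apply_eq_sum_single (x : ι → σ → R) :
    M x = ∑ idx : ι → σ, (∏ i, x i (idx i)) • M (fun i => Pi.single (idx i) 1) := by
  conv_lhs => rw [show x = fun i => ∑ j, x i j • Pi.single j 1 from
    funext fun i => pi_eq_sum_univ' (x i)]
  simp only [M.map_sum, M.map_smul_univ]

theorem sum_apply_restrictToFibers (x : ι → σ → R) :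
    ∑ f : σ → ι, M (restrictToFibers x f) = ∑ idx : ι → σ,
      (#{f : σ → ι | ∀ i, f (idx i) = i} * ∏ i, x i (idx i) : R) •
        M (fun i => Pi.single (idx i) 1) := by
  simp only [M.apply_eq_sum_single (restrictToFibers x _)]
  rw [sum_comm]
  simp only [← sum_smul, sum_prod_restrictToFibers_apply]

theorem sum_apply_restrictToFibers_eq_smul
    (hM : ∀ idx : ι → σ, ¬Injective idx → M (fun i => Pi.single (idx i) 1) = 0)
    (x : ι → σ → R) :
    ∑ f : σ → ι, M (restrictToFibers x f) =
      ((Fintype.card ι ^ (Fintype.card σ - Fintype.card ι) : ℕ) : R) • M x := by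
  rw [M.sum_apply_restrictToFibers, M.apply_eq_sum_single x, smul_sum]
  refine sum_congr rfl fun idx _ => ?_
  by_cases hidx : Injective idx
  · rw [card_filter_leftInverse_of_injective hidx, mul_smul]
  · simp [hM idx hidx]

end MultilinearMap

end CommSemiring

theorem sum_prod_sum_sq_restrictToFibers_le (x : ι → σ → ℝ) :
    ∑ f : σ → ι, ∏ i, ∑ j, restrictToFibers x f i j ^ 2 ≤
      (Fintype.card ι : ℝ) ^ (Fintype.card σ - Fintype.card ι) * ∏ i, ∑ j, x i j ^ 2 := by
  have hsq (f : σ → ι) (i : ι) (j : σ) :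
      restrictToFibers x f i j ^ 2 = restrictToFibers (fun i j => x i j ^ 2) f i j := by
    unfold restrictToFibers; split_ifs <;> simp
  simp only [hsq, Fintype.prod_sum]
  rw [sum_comm, mul_sum]
  refine sum_le_sum fun idx _ => ?_
  rw [sum_prod_restrictToFibers_apply]
  gcongr
  exact_mod_cast card_filter_leftInverse_le idx

theorem sum_prod_sqrt_sum_sq_restrictToFibers_le [Nonempty ι] (x : ι → σ → ℝ) :
    ∑ f : σ → ι, ∏ i, √(∑ j, restrictToFibers x f i j ^ 2) ≤
      (Fintype.card ι : ℝ) ^ (Fintype.card σ - Fintype.card ι) *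
        (Fintype.card ι : ℝ) ^ ((Fintype.card ι : ℝ) / 2) * ∏ i, √(∑ j, x i j ^ 2) := by
  set k := Fintype.card ι
  set n := Fintype.card σ
  have hk : (1 : ℝ) ≤ k := Nat.one_le_cast.2 Fintype.card_pos
  have hsqrt : ((k : ℝ) ^ ((k : ℝ) / 2)) ^ 2 = (k : ℝ) ^ k := by
    rw [← Real.rpow_mul_natCast (by positivity), ← Real.rpow_natCast]
    norm_num
  refine le_of_pow_le_pow_left₀ two_ne_zero (by positivity) ?_
  calc (∑ f : σ → ι, ∏ i, √(∑ j, restrictToFibers x f i j ^ 2)) ^ 2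
      ≤ (k : ℝ) ^ n * ∑ f : σ → ι, (∏ i, √(∑ j, restrictToFibers x f i j ^ 2)) ^ 2 := by
        simpa [k, n] using sq_sum_le_card_mul_sum_sq (s := (univ : Finset (σ → ι)))
    _ ≤ (k : ℝ) ^ n * ((k : ℝ) ^ (n - k) * ∏ i, ∑ j, x i j ^ 2) := by
        simp only [sq_prod_sqrt_sum_sq]
        gcongr
        exact sum_prod_sum_sq_restrictToFibers_le x
    _ ≤ (k : ℝ) ^ (n - k + k) * ((k : ℝ) ^ (n - k) * ∏ i, ∑ j, x i j ^ 2) := by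
        gcongr
        omega
    _ = _ := by rw [mul_pow, mul_pow, hsqrt, sq_prod_sqrt_sum_sq, pow_add]; ring

theorem MultilinearMap.abs_apply_le_of_forall_restrictToFibers [Nonempty ι]
    (D : MultilinearMap ℝ (fun _ : ι => σ → ℝ) ℝ)
    (hD : ∀ idx : ι → σ, ¬Injective idx → D (fun i => Pi.single (idx i) 1) = 0)
    {ρ : ℝ} (hρ : 0 ≤ ρ) (x : ι → σ → ℝ)
    (hx : ∀ f : σ → ι,
      |D (restrictToFibers x f)| ≤ ρ * ∏ i, √(∑ j, restrictToFibers x f i j ^ 2)) :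
    |D x| ≤ ρ * (Fintype.card ι : ℝ) ^ ((Fintype.card ι : ℝ) / 2) * ∏ i, √(∑ j, x i j ^ 2) := by
  set c : ℝ := (Fintype.card ι : ℝ) ^ (Fintype.card σ - Fintype.card ι)
  have hc : 0 < c := by have := Fintype.card_pos (α := ι); positivity
  refine le_of_mul_le_mul_left ?_ hc
  calc c * |D x| = |∑ f : σ → ι, D (restrictToFibers x f)| := by
        rw [D.sum_apply_restrictToFibers_eq_smul hD, smul_eq_mul, abs_mul, Nat.cast_pow,
          abs_of_pos hc]
    _ ≤ ∑ f : σ → ι, |D (restrictToFibers x f)| := abs_sum_le_sum_abs _ _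
    _ ≤ ρ * ∑ f : σ → ι, ∏ i, √(∑ j, restrictToFibers x f i j ^ 2) := by
        rw [mul_sum]
        exact sum_le_sum fun f _ => hx f
    _ ≤ ρ * (c * (Fintype.card ι : ℝ) ^ ((Fintype.card ι : ℝ) / 2) * ∏ i, √(∑ j, x i j ^ 2)) := by
        gcongr
        exact sum_prod_sqrt_sum_sq_restrictToFibers_le x
    _ = _ := by ring

theorem stmt_8 (n k : ℕ) (hk : 1 ≤ k) (hkn : k ≤ n) (α ρ : ℝ)
    (H : Finset (Finset (Fin n))) (hcard : ∀ e ∈ H, e.card = k)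
    (A AK : MultilinearMap ℝ (fun _ : Fin k => (Fin n → ℝ)) ℝ)
    (hA : ∀ idx : Fin k → Fin n,
      A (fun j => Pi.single (idx j) 1) = if Finset.image idx Finset.univ ∈ H then 1 else 0)
    (hAK : ∀ idx : Fin k → Fin n,
      AK (fun j => Pi.single (idx j) 1) = if Function.Injective idx then 1 else 0)
    (hdisj : ∀ x : Fin k → (Fin n → ℝ), (∀ i j, x i j = 0 ∨ x i j = 1) →
      (∀ i i', i ≠ i' → ∑ j, x i j * x i' j = 0) →
      |A x - α * AK x| ≤ ρ * ∏ i, Real.sqrt (∑ j, (x i j) ^ 2)) :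
    ∀ x : Fin k → (Fin n → ℝ), (∀ i j, x i j = 0 ∨ x i j = 1) →
      |A x - α * AK x| ≤ ρ * (k : ℝ) ^ ((k : ℝ) / 2) * ∏ i, Real.sqrt (∑ j, (x i j) ^ 2) := by
  intro x hx
  have : Nonempty (Fin k) := ⟨⟨0, hk⟩⟩
  have hD (idx : Fin k → Fin n) (hidx : ¬Injective idx) :
      (A - α • AK) (fun i => Pi.single (idx i) 1) = 0 := by
    have hH : univ.image idx ∉ H := fun hmem => hidx <| by
      simpa [Set.injOn_univ] using card_image_iff.1 ((hcard _ hmem).trans (card_fin k).symm)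
    simp [hA, hAK, hH, hidx]
  have hρ : 0 ≤ ρ := by
    have h := hdisj (fun i => Pi.single (Fin.castLE hkn i) 1)
      (fun i j => by simp only [Pi.single_apply]; split_ifs <;> simp)
      (fun i i' hii' => by simp [Pi.single_apply, Ne.symm hii'])
    simpa [Pi.single_apply] using (abs_nonneg _).trans h
  have hrestrict (f : Fin n → Fin k) := hdisj _ (restrictToFibers_eq_zero_or_one hx f)
    fun _ _ => sum_restrictToFibers_mul_of_ne x f
  simpa using (A - α • AK).abs_apply_le_of_forall_restrictToFibers hD hρ x
    (by simpa using hrestrict)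
end

section
/- For any k-uniform hypergraph H on n vertices (n ≥ k ≥ 2) and any constant α ∈ [0,1], the discrepancy parameter ρ_α(H) satisfies ρ_α(H) ≥ (α(1−α)/√(α² + (1−α)²)) · √(n−k+1). -/
/-- Number of ordered tuples `(v₁,…,v_k) ∈ V₁ × ⋯ × V_k` forming an edge of `H`. -/
def eCount (n k : ℕ) (H : Finset (Finset (Fin n))) (V : Fin k → Finset (Fin n)) : ℕ :=
  (Finset.univ.filter (fun v : Fin k → Fin n =>
    (∀ i, v i ∈ V i) ∧ Finset.image v Finset.univ ∈ H)).card

/-! Pin the first `k - 1` parts to singletons of distinct vertices `v₁, …, v_{k-1}` and let the last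
part `W` range over the other `n - k + 1` vertices. Taking `W` to be the link `S` of
`{v₁, …, v_{k-1}}` gives discrepancy ratio `(1 - α)√|S|`, taking its complement `T` gives `α√|T|`.
Since `|S| + |T| = n - k + 1`, adding `α²` times the square of the first bound to `(1 - α)²` times
the square of the second shows that the larger one is at least
`α(1 - α)/√(α² + (1 - α)²) · √(n - k + 1)`. -/

open Finset

lemma mul_sqrt_add_le_max {α s t : ℝ} (hα0 : 0 ≤ α) (hα1 : α ≤ 1) (hs : 0 ≤ s) (ht : 0 ≤ t) :
    α * (1 - α) / √(α ^ 2 + (1 - α) ^ 2) * √(s + t) ≤ max ((1 - α) * √s) (α * √t) := by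
  set M := max ((1 - α) * √s) (α * √t)
  have hD : 0 < α ^ 2 + (1 - α) ^ 2 := by nlinarith
  have hMs : (1 - α) ^ 2 * s ≤ M ^ 2 := by
    calc (1 - α) ^ 2 * s = ((1 - α) * √s) ^ 2 := by rw [mul_pow, Real.sq_sqrt hs]
      _ ≤ M ^ 2 := pow_le_pow_left₀ (by positivity) (le_max_left _ _) 2
  have hMt : α ^ 2 * t ≤ M ^ 2 := by
    calc α ^ 2 * t = (α * √t) ^ 2 := by rw [mul_pow, Real.sq_sqrt ht]
      _ ≤ M ^ 2 := pow_le_pow_left₀ (by positivity) (le_max_right _ _) 2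
  rw [div_mul_eq_mul_div, div_le_iff₀ (Real.sqrt_pos.2 hD),
    ← pow_le_pow_iff_left₀ (mul_nonneg (mul_nonneg hα0 (sub_nonneg.2 hα1)) (Real.sqrt_nonneg _))
      (by positivity) two_ne_zero,
    mul_pow, mul_pow, mul_pow, Real.sq_sqrt (by positivity), Real.sq_sqrt hD.le]
  nlinarith [mul_le_mul_of_nonneg_left hMs (sq_nonneg α),
    mul_le_mul_of_nonneg_left hMt (sq_nonneg (1 - α))]

lemma abs_sub_mul_self_div_sqrt {α x : ℝ} (hα1 : α ≤ 1) (hx : 0 ≤ x) :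
    |x - α * x| / √x = (1 - α) * √x := by
  rw [← one_sub_mul, abs_of_nonneg (by nlinarith), mul_div_assoc, Real.div_sqrt]

lemma abs_zero_sub_mul_div_sqrt {α x : ℝ} (hα0 : 0 ≤ α) (hx : 0 ≤ x) :
    |0 - α * x| / √x = α * √x := by
  rw [zero_sub, abs_neg, abs_of_nonneg (by positivity), mul_div_assoc, Real.div_sqrt]

section Pinned

variable {n m : ℕ} (e : Fin m ↪ Fin n)

def pinnedParts (W : Finset (Fin n)) : Fin (m + 1) → Finset (Fin n) :=
  Fin.lastCases W fun i => {e i}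

variable {W : Finset (Fin n)}

lemma forall_mem_pinnedParts_iff {v : Fin (m + 1) → Fin n} :
    (∀ i, v i ∈ pinnedParts e W i) ↔ v = Fin.snoc e (v (Fin.last m)) ∧ v (Fin.last m) ∈ W := by
  rw [Fin.forall_fin_succ']
  simp only [pinnedParts, Fin.lastCases_castSucc, Fin.lastCases_last, mem_singleton]
  constructor
  · rintro ⟨hv, hw⟩
    refine ⟨?_, hw⟩
    conv_lhs => rw [← Fin.snoc_init_self v]
    congr
    exact funext hv
  · rintro ⟨hv, hw⟩
    refine ⟨fun i => ?_, hw⟩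
    rw [hv, Fin.snoc_castSucc]

lemma image_snoc_eq_insert_map (w : Fin n) :
    univ.image (Fin.snoc e w : Fin (m + 1) → Fin n) = insert w (univ.map e) := by
  ext u
  simp [Fin.exists_fin_succ', eq_comm, or_comm]

lemma eCount_pinnedParts (H : Finset (Finset (Fin n))) :
    eCount n (m + 1) H (pinnedParts e W) = #{w ∈ W | insert w (univ.map e) ∈ H} := by
  refine card_nbij' (· (Fin.last m)) (Fin.snoc e ·) ?_ ?_ ?_ ?_
  · intro v hv
    simp only [coe_filter, mem_univ, true_and, Set.mem_ofPred_eq,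
      forall_mem_pinnedParts_iff] at hv ⊢
    obtain ⟨⟨hv, hw⟩, hH⟩ := hv
    rw [hv, image_snoc_eq_insert_map] at hH
    exact ⟨hw, hH⟩
  · intro w hw
    simp only [coe_filter, mem_univ, true_and, Set.mem_ofPred_eq,
      forall_mem_pinnedParts_iff, Fin.snoc_last, image_snoc_eq_insert_map] at hw ⊢
    exact hw
  · intro v hv
    simp only [coe_filter, mem_univ, true_and, Set.mem_ofPred_eq,
      forall_mem_pinnedParts_iff] at hv
    exact hv.1.1.symm
  · intro w _
    exact Fin.snoc_last (α := fun _ => Fin n) w e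

lemma pinnedParts_disjoint (hW : Disjoint W (univ.map e)) {i j : Fin (m + 1)} (hij : i ≠ j) :
    Disjoint (pinnedParts e W i) (pinnedParts e W j) := by
  have he (x : Fin m) : e x ∉ W := disjoint_right.1 hW (mem_map_of_mem e (mem_univ x))
  cases i using Fin.lastCases <;> cases j using Fin.lastCases <;>
    simp_all [pinnedParts, disjoint_singleton_left, disjoint_singleton_right, Fin.castSucc_inj]

lemma pinnedParts_nonempty (hW : W.Nonempty) (i : Fin (m + 1)) : (pinnedParts e W i).Nonempty := by
  cases i using Fin.lastCases <;> simp [pinnedParts, hW]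

lemma prod_card_pinnedParts : ∏ i, #(pinnedParts e W i) = #W := by
  simp [Fin.prod_univ_castSucc, pinnedParts]

lemma exists_parts_of_le_pinned {α c : ℝ} (H : Finset (Finset (Fin n)))
    (hWe : Disjoint W (univ.map e)) (hW : W.Nonempty)
    (hc : c ≤ |(#{w ∈ W | insert w (univ.map e) ∈ H} : ℝ) - α * #W| / √(#W : ℝ)) :
    ∃ V : Fin (m + 1) → Finset (Fin n),
      (∀ i j, i ≠ j → Disjoint (V i) (V j)) ∧ (∀ i, (V i).Nonempty) ∧
      c ≤ |(eCount n (m + 1) H V : ℝ) - α * ∏ i, ((V i).card : ℝ)|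
            / √(∏ i, ((V i).card : ℝ)) := by
  refine ⟨pinnedParts e W, fun i j => pinnedParts_disjoint e hWe, pinnedParts_nonempty e hW, ?_⟩
  rwa [eCount_pinnedParts, ← Nat.cast_prod, prod_card_pinnedParts]

end Pinned

lemma Finset.nonempty_of_pos_mul_sqrt_card {ι : Type*} {s : Finset ι} {a : ℝ}
    (h : 0 < a * √(#s : ℝ)) : s.Nonempty := by
  rw [← card_pos]
  by_contra h0
  simp_all

theorem stmt_12_general (n k : ℕ) (hk : 2 ≤ k) (hkn : k ≤ n) (α : ℝ) (hα0 : 0 ≤ α) (hα1 : α ≤ 1)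
    (H : Finset (Finset (Fin n))) :
    ∃ V : Fin k → Finset (Fin n),
      (∀ i j, i ≠ j → Disjoint (V i) (V j)) ∧ (∀ i, (V i).Nonempty) ∧
      α * (1 - α) / Real.sqrt (α ^ 2 + (1 - α) ^ 2) * Real.sqrt ((n : ℝ) - k + 1)
        ≤ |(eCount n k H V : ℝ) - α * ∏ i, ((V i).card : ℝ)|
            / Real.sqrt (∏ i, ((V i).card : ℝ)) := by
  obtain ⟨m, rfl⟩ : ∃ m, k = m + 1 := ⟨k - 1, by omega⟩
  set e := Fin.castLEEmb (show m ≤ n by omega)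
  set R := (univ.map e)ᶜ
  set S := {w ∈ R | insert w (univ.map e) ∈ H}
  set T := {w ∈ R | insert w (univ.map e) ∉ H}
  have hRe : Disjoint R (univ.map e) := disjoint_compl_left
  have hR : (#S : ℝ) + #T = (n : ℝ) - (m + 1 : ℕ) + 1 := by
    rw [← Nat.cast_add, card_filter_add_card_filter_not, card_compl, card_map,
      Fintype.card_fin, card_univ, Fintype.card_fin, Nat.cast_sub (by omega)]
    push_cast
    ring
  have hbound := hR ▸ mul_sqrt_add_le_max hα0 hα1 (#S).cast_nonneg (#T).cast_nonneg
  set bound := α * (1 - α) / √(α ^ 2 + (1 - α) ^ 2) * √((n : ℝ) - (m + 1 : ℕ) + 1)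
  obtain h0 | hpos := (show 0 ≤ bound from mul_nonneg (div_nonneg
    (mul_nonneg hα0 (sub_nonneg.2 hα1)) (Real.sqrt_nonneg _)) (Real.sqrt_nonneg _)).eq_or_lt
  · have hRne : R.Nonempty :=
      ⟨⟨m, by omega⟩, by simpa [R, e, Fin.ext_iff] using fun x : Fin m => x.isLt.ne⟩
    exact exists_parts_of_le_pinned e H hRe hRne (h0 ▸ by positivity)
  rcases le_max_iff.1 hbound with hS | hT
  · refine exists_parts_of_le_pinned e H (hRe.mono_left (filter_subset _ _))
      (nonempty_of_pos_mul_sqrt_card (hpos.trans_le hS)) ?_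
    rwa [filter_true_of_mem fun w hw => (mem_filter.1 hw).2,
      abs_sub_mul_self_div_sqrt hα1 (by positivity)]
  · refine exists_parts_of_le_pinned e H (hRe.mono_left (filter_subset _ _))
      (nonempty_of_pos_mul_sqrt_card (hpos.trans_le hT)) ?_
    rwa [filter_false_of_mem fun w hw => (mem_filter.1 hw).2, card_empty, Nat.cast_zero,
      abs_zero_sub_mul_div_sqrt hα0 (by positivity)]

theorem stmt_12 (n k : ℕ) (hk : 2 ≤ k) (hkn : k ≤ n) (α : ℝ) (hα0 : 0 ≤ α) (hα1 : α ≤ 1)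
    (H : Finset (Finset (Fin n))) (hcard : ∀ e ∈ H, e.card = k) :
    ∃ V : Fin k → Finset (Fin n),
      (∀ i j, i ≠ j → Disjoint (V i) (V j)) ∧ (∀ i, (V i).Nonempty) ∧
      α * (1 - α) / Real.sqrt (α ^ 2 + (1 - α) ^ 2) * Real.sqrt ((n : ℝ) - k + 1)
        ≤ |(eCount n k H V : ℝ) - α * ∏ i, ((V i).card : ℝ)|
            / Real.sqrt (∏ i, ((V i).card : ℝ)) :=
  stmt_12_general n k hk hkn α hα0 hα1 H
end
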